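/- arXiv:2212.14514 — 2 statements merged into one kernel-verified Lean document; each statement's English description precedes it below -/
import Mathlib

section
/- Let f ∈ C¹(ℝ^d) have compactly supported gradient with ∫_{ℝ^d} ‖∇f(x)‖₂ dx < ∞, let Ω ⊆ ℝ^d be a bounded measurable set, and let ε > 0. Then ∫_Ω ∫_Ω |f(x') - f(x)| 1{‖x' - x‖₂ ≤ ε} dx' dx ≤ C_d ε^{d+1} ∫_{ℝ^d} ‖∇f(x)‖₂ dx, where C_d = ∫_{B(0,1)} ‖z‖₂ dz depends only on d. -/
/-!
By the fundamental theorem of calculus along the segment from `x` to `x + v`,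
`‖f (x + v) - f x‖ ≤ ‖v‖ ∫₀¹ ‖Df (x + t v)‖ dt`. Enlarge `Ω × Ω` to the whole space and work with
lower Lebesgue integrals, where Tonelli only asks for measurability: integrating first in `x`,
translation invariance turns `∫ ‖Df (x + t v)‖ dx` into `∫ ‖Df‖`, and what is left is
`∫_{‖v‖ ≤ ε} ‖v‖ dv = ε^(d+1) ∫_{B(0,1)} ‖z‖ dz` by scaling.
-/

open MeasureTheory Metric Set Module

theorem enorm_sub_le_lintegral_fderiv {E F : Type*} [NormedAddCommGroup E] [NormedSpace ℝ E]
    [NormedAddCommGroup F] [NormedSpace ℝ F] [CompleteSpace F]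
    {f : E → F} (hf : ContDiff ℝ 1 f) (x v : E) :
    ‖f (x + v) - f x‖ₑ ≤ ‖v‖ₑ * ∫⁻ t in Ioc (0 : ℝ) 1, ‖fderiv ℝ f (x + t • v)‖ₑ := by
  have hline : ∀ t : ℝ, HasDerivAt (fun t : ℝ => x + t • v) v t := fun t => by
    simpa using ((hasDerivAt_id t).smul_const v).const_add x
  have hDf : Continuous fun t : ℝ => fderiv ℝ f (x + t • v) :=
    (hf.continuous_fderiv one_ne_zero).comp (by fun_prop)
  have hftc : f (x + v) - f x = ∫ t in Ioc (0 : ℝ) 1, fderiv ℝ f (x + t • v) v := by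
    rw [← intervalIntegral.integral_of_le zero_le_one,
      intervalIntegral.integral_eq_sub_of_hasDerivAt
        (fun t _ => (hf.differentiable one_ne_zero _).hasFDerivAt.comp_hasDerivAt t (hline t))
        ((hDf.clm_apply continuous_const).intervalIntegrable 0 1)]
    simp
  calc ‖f (x + v) - f x‖ₑ
      ≤ ∫⁻ t in Ioc (0 : ℝ) 1, ‖fderiv ℝ f (x + t • v) v‖ₑ :=
        hftc ▸ enorm_integral_le_lintegral_enorm _
    _ ≤ ∫⁻ t in Ioc (0 : ℝ) 1, ‖fderiv ℝ f (x + t • v)‖ₑ * ‖v‖ₑ :=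
        lintegral_mono fun t => ContinuousLinearMap.le_opENorm _ v
    _ = ‖v‖ₑ * ∫⁻ t in Ioc (0 : ℝ) 1, ‖fderiv ℝ f (x + t • v)‖ₑ := by
        rw [lintegral_mul_const' _ _ enorm_ne_top, mul_comm]

theorem enorm_setIntegral_setIntegral_abs_sub_le {E : Type*} [NormedAddCommGroup E]
    [MeasurableSpace E] [OpensMeasurableSpace E] (μ : Measure E) (f : E → ℝ) (Ω : Set E)
    (r : ℝ) :
    ‖∫ x in Ω, ∫ x' in Ω, |f x' - f x| * (if ‖x' - x‖ ≤ r then 1 else 0) ∂μ ∂μ‖ₑ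
      ≤ ∫⁻ x, ∫⁻ y in closedBall x r, ‖f y - f x‖ₑ ∂μ ∂μ := by
  have hK : ∀ x x', ‖|f x' - f x| * (if ‖x' - x‖ ≤ r then (1 : ℝ) else 0)‖ₑ
      = (closedBall x r).indicator (fun y => ‖f y - f x‖ₑ) x' := by
    intro x x'
    by_cases h : ‖x' - x‖ ≤ r <;> simp [h, dist_eq_norm]
  calc _ ≤ ∫⁻ x in Ω, ∫⁻ x' in Ω,
          ‖|f x' - f x| * (if ‖x' - x‖ ≤ r then (1 : ℝ) else 0)‖ₑ ∂μ ∂μ :=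
        (enorm_integral_le_lintegral_enorm _).trans
          (lintegral_mono fun x => enorm_integral_le_lintegral_enorm _)
    _ ≤ ∫⁻ x, ∫⁻ x', ‖|f x' - f x| * (if ‖x' - x‖ ≤ r then (1 : ℝ) else 0)‖ₑ ∂μ ∂μ :=
        (setLIntegral_le_lintegral _ _).trans
          (lintegral_mono fun x => setLIntegral_le_lintegral _ _)
    _ = ∫⁻ x, ∫⁻ y in closedBall x r, ‖f y - f x‖ₑ ∂μ ∂μ := by
        simp_rw [hK, lintegral_indicator measurableSet_closedBall]

theorem setLIntegral_closedBall_eq_comp_add {G : Type*} [NormedAddCommGroup G]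
    [MeasurableSpace G] [BorelSpace G] (μ : Measure G) [μ.IsAddLeftInvariant]
    (φ : G → ENNReal) (x : G) (r : ℝ) :
    ∫⁻ y in closedBall x r, φ y ∂μ = ∫⁻ v in closedBall 0 r, φ (x + v) ∂μ := by
  rw [← (measurePreserving_add_left μ x).setLIntegral_comp_preimage_emb
    (measurableEmbedding_addLeft x)]
  congr 2
  ext v
  simp [dist_eq_norm]

section Invariant

variable {E : Type*} [NormedAddCommGroup E] [NormedSpace ℝ E] [SecondCountableTopology E]
  [MeasurableSpace E] [BorelSpace E] (μ : Measure E) [μ.IsAddLeftInvariant] [SFinite μ]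

theorem lintegral_lintegral_Ioc_comp_add_smul {g : E → ENNReal} (hg : Measurable g) (v : E) :
    ∫⁻ x, (∫⁻ t in Ioc (0 : ℝ) 1, g (x + t • v)) ∂μ = ∫⁻ x, g x ∂μ := by
  have hm : Measurable (Function.uncurry fun (x : E) (t : ℝ) => g (x + t • v)) :=
    hg.comp (by fun_prop)
  rw [lintegral_lintegral_swap hm.aemeasurable]
  simp [lintegral_add_right_eq_self (μ := μ) g]

theorem lintegral_setLIntegral_closedBall_enorm_sub_le {F : Type*} [NormedAddCommGroup F]
    [NormedSpace ℝ F] [CompleteSpace F] {f : E → F} (hf : ContDiff ℝ 1 f) (r : ℝ) :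
    ∫⁻ x, ∫⁻ y in closedBall x r, ‖f y - f x‖ₑ ∂μ ∂μ
      ≤ (∫⁻ v in closedBall 0 r, ‖v‖ₑ ∂μ) * ∫⁻ x, ‖fderiv ℝ f x‖ₑ ∂μ := by
  set G : E → ENNReal := fun y => ‖fderiv ℝ f y‖ₑ
  have hG : Measurable G := (hf.continuous_fderiv one_ne_zero).enorm.measurable
  have hH : Measurable (Function.uncurry fun (x v : E) =>
      ‖v‖ₑ * ∫⁻ t in Ioc (0 : ℝ) 1, G (x + t • v)) :=
    measurable_snd.enorm.mul (Measurable.lintegral_prod_right'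
      (f := fun q : (E × E) × ℝ => G (q.1.1 + q.2 • q.1.2)) (hG.comp (by fun_prop)))
  calc ∫⁻ x, ∫⁻ y in closedBall x r, ‖f y - f x‖ₑ ∂μ ∂μ
      = ∫⁻ x, ∫⁻ v in closedBall 0 r, ‖f (x + v) - f x‖ₑ ∂μ ∂μ :=
        lintegral_congr fun x => setLIntegral_closedBall_eq_comp_add μ _ x r
    _ ≤ ∫⁻ x, ∫⁻ v in closedBall 0 r, ‖v‖ₑ * (∫⁻ t in Ioc (0 : ℝ) 1, G (x + t • v)) ∂μ ∂μ :=
        lintegral_mono fun x => lintegral_mono fun v => enorm_sub_le_lintegral_fderiv hf x v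
    _ = ∫⁻ v in closedBall 0 r, ‖v‖ₑ * ∫⁻ x, (∫⁻ t in Ioc (0 : ℝ) 1, G (x + t • v)) ∂μ ∂μ := by
        rw [lintegral_lintegral_swap hH.aemeasurable]
        exact lintegral_congr fun v => lintegral_const_mul' _ _ enorm_ne_top
    _ = (∫⁻ v in closedBall 0 r, ‖v‖ₑ ∂μ) * ∫⁻ x, G x ∂μ := by
        simp_rw [lintegral_lintegral_Ioc_comp_add_smul μ hG]
        exact lintegral_mul_const _ measurable_enorm

end Invariant

section Haar

variable {E : Type*} [NormedAddCommGroup E] [NormedSpace ℝ E] [FiniteDimensional ℝ E]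
  [MeasurableSpace E] [BorelSpace E] (μ : Measure E) [μ.IsAddHaarMeasure]

theorem ball_ae_eq_closedBall (x : E) {r : ℝ} (hr : r ≠ 0) : ball x r =ᵐ[μ] closedBall x r :=
  ae_eq_set.2 ⟨by simp [sdiff_eq_empty.2 ball_subset_closedBall],
    by rw [closedBall_sdiff_ball]; exact Measure.addHaar_sphere_of_ne_zero μ x hr⟩

theorem setLIntegral_closedBall_zero_enorm {r : ℝ} (hr : 0 < r) :
    ∫⁻ v in closedBall 0 r, ‖v‖ₑ ∂μ
      = ENNReal.ofReal (r ^ (finrank ℝ E + 1)) * ∫⁻ z in ball 0 1, ‖z‖ₑ ∂μ := by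
  have hpre : (r • ·) ⁻¹' closedBall (0 : E) r = closedBall 0 1 := by
    ext z
    simp [norm_smul, abs_of_pos hr, hr]
  have key := setLIntegral_map (μ := μ) (f := fun v : E => ‖v‖ₑ)
    (measurableSet_closedBall (x := 0) (ε := r)) measurable_enorm (measurable_const_smul r)
  rw [Measure.map_addHaar_smul μ hr.ne', Measure.restrict_smul, lintegral_smul_measure, hpre,
    abs_of_pos (inv_pos.2 (pow_pos hr _))] at key
  simp only [enorm_smul, smul_eq_mul] at key
  rw [lintegral_const_mul' _ _ enorm_ne_top] at key
  rw [setLIntegral_congr (ball_ae_eq_closedBall μ 0 one_ne_zero)]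
  calc ∫⁻ v in closedBall 0 r, ‖v‖ₑ ∂μ
      = ENNReal.ofReal (r ^ finrank ℝ E)
          * (ENNReal.ofReal (r ^ finrank ℝ E)⁻¹ * ∫⁻ v in closedBall 0 r, ‖v‖ₑ ∂μ) := by
        rw [← mul_assoc, ← ENNReal.ofReal_mul (by positivity),
          mul_inv_cancel₀ (by positivity), ENNReal.ofReal_one, one_mul]
    _ = _ := by
        rw [key, Real.enorm_eq_ofReal hr.le, ← mul_assoc, ← ENNReal.ofReal_mul (by positivity),
          ← pow_succ]

end Haar

theorem stmt15_general {d : ℕ} (f : EuclideanSpace ℝ (Fin d) → ℝ)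
    (hf : ContDiff ℝ 1 f)
    (hint : Integrable (fun x => ‖gradient f x‖))
    (Ω : Set (EuclideanSpace ℝ (Fin d))) (ε : ℝ) (hε : 0 < ε) :
    ∫ x in Ω, ∫ x' in Ω, |f x' - f x| * (if ‖x' - x‖ ≤ ε then 1 else 0)
      ≤ (∫ z in Metric.ball (0 : EuclideanSpace ℝ (Fin d)) 1, ‖z‖)
          * ε ^ (d + 1) * ∫ x, ‖gradient f x‖ := by
  have hgrad : ∀ x, ‖fderiv ℝ f x‖ₑ = ‖gradient f x‖ₑ := fun x => by simp [gradient]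
  have hbound := (enorm_setIntegral_setIntegral_abs_sub_le volume f Ω ε).trans
    (lintegral_setLIntegral_closedBall_enorm_sub_le volume hf ε)
  rw [setLIntegral_closedBall_zero_enorm volume hε, finrank_euclideanSpace_fin] at hbound
  simp_rw [hgrad] at hbound
  have hball_fin : ∫⁻ z in ball (0 : EuclideanSpace ℝ (Fin d)) 1, ‖z‖ₑ ≠ ⊤ :=
    ((continuous_id.continuousOn.integrableOn_compact (isCompact_closedBall _ _)).mono_set
      ball_subset_closedBall).2.ne
  have hgrad_fin : ∫⁻ x, ‖gradient f x‖ₑ ≠ ⊤ := by simpa using hint.2.ne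
  have hgrad_int := integral_norm_eq_lintegral_enorm hint.1
  simp only [norm_norm, enorm_norm] at hgrad_int
  calc _ ≤ ‖∫ x in Ω, ∫ x' in Ω, |f x' - f x| * (if ‖x' - x‖ ≤ ε then (1 : ℝ) else 0)‖ :=
        Real.le_norm_self _
    _ ≤ _ := (toReal_enorm _).symm.trans_le <| ENNReal.toReal_mono
        (ENNReal.mul_ne_top (ENNReal.mul_ne_top ENNReal.ofReal_ne_top hball_fin) hgrad_fin) hbound
    _ = _ := by
        rw [ENNReal.toReal_mul, ENNReal.toReal_mul, ENNReal.toReal_ofReal (by positivity),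
          integral_norm_eq_lintegral_enorm (f := fun z => z) aestronglyMeasurable_id, hgrad_int]
        ring

/-- For `f ∈ C¹(ℝ^d)` with compactly supported, integrable gradient, a bounded
measurable `Ω`, and `ε > 0`:
`∫_Ω ∫_Ω |f(x') - f(x)| 1{‖x'-x‖ ≤ ε} dx' dx ≤ C_d ε^{d+1} ∫ ‖∇f‖`,
with `C_d = ∫_{B(0,1)} ‖z‖ dz`. -/
theorem stmt15 {d : ℕ} (hd : 0 < d) (f : EuclideanSpace ℝ (Fin d) → ℝ)
    (hf : ContDiff ℝ 1 f) (hsupp : HasCompactSupport (gradient f))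
    (hint : Integrable (fun x => ‖gradient f x‖))
    (Ω : Set (EuclideanSpace ℝ (Fin d))) (hΩm : MeasurableSet Ω)
    (hΩb : Bornology.IsBounded Ω) (ε : ℝ) (hε : 0 < ε) :
    ∫ x in Ω, ∫ x' in Ω, |f x' - f x| * (if ‖x' - x‖ ≤ ε then 1 else 0)
      ≤ (∫ z in Metric.ball (0 : EuclideanSpace ℝ (Fin d)) 1, ‖z‖)
          * ε ^ (d + 1) * ∫ x, ‖gradient f x‖ :=
  stmt15_general f hf hint Ω ε hε
end

section
/- Suppose the criterion J(f) = (1/2) Σ_{i=1}^n (y_i - f(x_i))² + λ · Σ_{i=1}^n |y_i| · c_d ε^{d-1} is achieved by the function f_ε = Σ_{i=1}^n y_i · 1_{B(x_i, ε)} for distinct points x₁, …, xₙ ∈ ℝ^d, d ≥ 2, where the TV of f_ε is at most Σ_i |y_i| per(B(x_i, ε)) = Σ_i |y_i| c_d ε^{d-1} with c_d = H^{d-1}(∂B(0,1)). Then for all sufficiently small ε > 0 (small enough that the balls B(x_i, ε) are pairwise disjoint), f_ε interpolates the data (f_ε(x_i) = y_i for all i) and J(f_ε) → 0 as ε → 0⁺.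 Consequently, the infimum over bounded-variation functions of (1/2) Σᵢ (y_i - f(x_i))² + λ TV(f) is 0, for every λ > 0. -/
/-!
Once `ε` is below the minimal distance between the design points, the ball around `x i`
contains no other design point, so `f_ε` interpolates and the criterion reduces to the
penalty `λ Σ_i |y_i| c_d ε^{d-1}`, which vanishes as `ε → 0⁺` because `d - 1 ≥ 1`.
Subadditivity and homogeneity of `TV` bound `TV(f_ε)` by that penalty, so the nonnegative
infimum is squeezed to `0`.
-/

open Filter Topology Metric Set

theorem sum_smul_indicator_closedBall_apply_of_lt_dist {ι E : Type*} [Fintype ι]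
    [PseudoMetricSpace E] {x : ι → E} (y : ι → ℝ) {ε : ℝ} (hε : 0 ≤ ε) {i : ι}
    (hsep : ∀ j, j ≠ i → ε < dist (x i) (x j)) :
    (∑ j, y j • (closedBall (x j) ε).indicator fun _ => (1 : ℝ)) (x i) = y i := by
  classical
  rw [Finset.sum_apply, Finset.sum_eq_single i]
  · simp [mem_closedBall_self hε]
  · intro j _ hji
    have hi : x i ∉ closedBall (x j) ε := not_le.2 (hsep j hji)
    simp [hi]
  · simp

theorem eventually_sum_smul_indicator_closedBall_apply {ι E : Type*} [Fintype ι]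
    [MetricSpace E] {x : ι → E} (hx : Function.Injective x) (y : ι → ℝ) :
    ∀ᶠ ε in 𝓝[>] (0 : ℝ), ∀ i,
      (∑ j, y j • (closedBall (x j) ε).indicator fun _ => (1 : ℝ)) (x i) = y i := by
  have hsep : ∀ᶠ ε in 𝓝[>] (0 : ℝ), ∀ i j, j ≠ i → ε < dist (x i) (x j) := by
    refine eventually_all.2 fun i => eventually_all.2 fun j => ?_
    by_cases hji : j = i
    · exact Eventually.of_forall fun _ h => absurd hji h
    · have hpos : 0 < dist (x i) (x j) := dist_pos.2 fun h => hji (hx h).symm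
      exact (eventually_nhdsWithin_of_eventually_nhds (eventually_lt_nhds hpos)).mono fun _ h _ => h
  filter_upwards [hsep, self_mem_nhdsWithin] with ε hε hpos i
  exact sum_smul_indicator_closedBall_apply_of_lt_dist y (le_of_lt hpos) (hε i)

theorem le_sum_abs_mul_of_subadditive {ι F : Type*} [AddCommGroup F] [Module ℝ F]
    (TV : F → ℝ) (hadd : ∀ f g, TV (f + g) ≤ TV f + TV g)
    (hsmul : ∀ (c : ℝ) f, TV (c • f) = |c| * TV f) (s : Finset ι) (y : ι → ℝ)
    (g : ι → F) :
    TV (∑ j ∈ s, y j • g j) ≤ ∑ j ∈ s, |y j| * TV (g j) := by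
  have hzero : TV 0 = 0 := by simpa using hsmul 0 0
  simpa only [hsmul] using Finset.le_sum_of_subadditive TV hzero.le hadd s fun j => y j • g j

theorem tendsto_mul_sum_mul_pow_nhdsGT_zero {ι : Type*} [Fintype ι] (a c : ℝ) (b : ι → ℝ)
    {k : ℕ} (hk : k ≠ 0) :
    Tendsto (fun ε : ℝ => a * ∑ i, b i * (c * ε ^ k)) (𝓝[>] 0) (𝓝 0) := by
  have hcont : Continuous fun ε : ℝ => a * ∑ i, b i * (c * ε ^ k) := by fun_prop
  exact (hcont.tendsto' 0 0 (by simp [zero_pow hk])).mono_left nhdsWithin_le_nhds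

theorem stmt16_general {d n : ℕ} (hd : 2 ≤ d)
    (x : Fin n → EuclideanSpace ℝ (Fin d)) (hx : Function.Injective x)
    (y : Fin n → ℝ) (lam : ℝ) (hlam : 0 < lam)
    (TV : (EuclideanSpace ℝ (Fin d) → ℝ) → ℝ) (c_d : ℝ)
    (hTVnn : ∀ f, 0 ≤ TV f)
    (hTVadd : ∀ f g, TV (f + g) ≤ TV f + TV g)
    (hTVsmul : ∀ (c : ℝ) f, TV (c • f) = |c| * TV f)
    (hTVball : ∀ (z : EuclideanSpace ℝ (Fin d)) (ε : ℝ), 0 < ε →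
      TV (Set.indicator (Metric.closedBall z ε) fun _ => (1 : ℝ)) = c_d * ε ^ (d - 1)) :
    (∃ ε₀ > (0 : ℝ), ∀ ε ∈ Set.Ioo (0 : ℝ) ε₀, ∀ i,
        (∑ j, y j • Set.indicator (Metric.closedBall (x j) ε) fun _ => (1 : ℝ)) (x i)
          = y i) ∧
    Filter.Tendsto (fun ε : ℝ =>
        (1 / 2) * ∑ i, (y i -
            (∑ j, y j • Set.indicator (Metric.closedBall (x j) ε) fun _ => (1 : ℝ))
              (x i)) ^ 2
          + lam * ∑ i, |y i| * (c_d * ε ^ (d - 1)))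
      (nhdsWithin 0 (Set.Ioi 0)) (nhds 0) ∧
    (⨅ f : EuclideanSpace ℝ (Fin d) → ℝ,
        ((1 / 2) * ∑ i, (y i - f (x i)) ^ 2 + lam * TV f)) = 0 := by
  have hinterp := eventually_sum_smul_indicator_closedBall_apply hx y
  have hcrit : Tendsto (fun ε : ℝ =>
      (1 / 2) * ∑ i, (y i -
          (∑ j, y j • (closedBall (x j) ε).indicator fun _ => (1 : ℝ)) (x i)) ^ 2
        + lam * ∑ i, |y i| * (c_d * ε ^ (d - 1))) (𝓝[>] 0) (𝓝 0) := by
    refine (tendsto_mul_sum_mul_pow_nhdsGT_zero lam c_d (fun i => |y i|)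
      (by omega : d - 1 ≠ 0)).congr' (hinterp.mono fun ε h => ?_)
    simp [h]
  have hJ_nonneg : ∀ f : EuclideanSpace ℝ (Fin d) → ℝ,
      0 ≤ (1 / 2) * ∑ i, (y i - f (x i)) ^ 2 + lam * TV f :=
    fun f => add_nonneg (by positivity) (mul_nonneg hlam.le (hTVnn f))
  refine ⟨?_, hcrit, le_antisymm ?_ (le_ciInf hJ_nonneg)⟩
  · obtain ⟨ε₀, hε₀, hsub⟩ := mem_nhdsGT_iff_exists_Ioo_subset.1 hinterp
    exact ⟨ε₀, hε₀, hsub⟩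
  · refine ge_of_tendsto hcrit (eventually_mem_nhdsWithin.mono fun ε (hε : 0 < ε) => ?_)
    refine (ciInf_le ⟨0, forall_mem_range.2 hJ_nonneg⟩
      (∑ j, y j • (closedBall (x j) ε).indicator fun _ => (1 : ℝ))).trans ?_
    gcongr
    refine (le_sum_abs_mul_of_subadditive TV hTVadd hTVsmul _ _ _).trans_eq ?_
    simp only [hTVball _ ε hε]

/-- Ill-posedness of TV-penalized regression for `d ≥ 2`: for distinct design
points `x i` and any `λ > 0`, the functions `f_ε = Σ_i y_i · 1_{B(x_i, ε)}`
interpolate the data for all small `ε > 0`; the criterion value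
`(1/2) Σ_i (y_i - f_ε(x_i))² + λ Σ_i |y_i| c_d ε^{d-1}` tends to `0` as
`ε → 0⁺`; and consequently the infimum over all functions `f` of
`(1/2) Σ_i (y_i - f(x_i))² + λ TV(f)` is `0`, for any nonnegative, subadditive,
absolutely homogeneous `TV` with `TV(1_{B(x,ε)}) = c_d ε^{d-1}`. -/
theorem stmt16 {d n : ℕ} (hd : 2 ≤ d)
    (x : Fin n → EuclideanSpace ℝ (Fin d)) (hx : Function.Injective x)
    (y : Fin n → ℝ) (lam : ℝ) (hlam : 0 < lam)
    (TV : (EuclideanSpace ℝ (Fin d) → ℝ) → ℝ) (c_d : ℝ) (hcd : 0 < c_d)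
    (hTVnn : ∀ f, 0 ≤ TV f)
    (hTVadd : ∀ f g, TV (f + g) ≤ TV f + TV g)
    (hTVsmul : ∀ (c : ℝ) f, TV (c • f) = |c| * TV f)
    (hTVball : ∀ (z : EuclideanSpace ℝ (Fin d)) (ε : ℝ), 0 < ε →
      TV (Set.indicator (Metric.closedBall z ε) fun _ => (1 : ℝ)) = c_d * ε ^ (d - 1)) :
    (∃ ε₀ > (0 : ℝ), ∀ ε ∈ Set.Ioo (0 : ℝ) ε₀, ∀ i,
        (∑ j, y j • Set.indicator (Metric.closedBall (x j) ε) fun _ => (1 : ℝ)) (x i)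
          = y i) ∧
    Filter.Tendsto (fun ε : ℝ =>
        (1 / 2) * ∑ i, (y i -
            (∑ j, y j • Set.indicator (Metric.closedBall (x j) ε) fun _ => (1 : ℝ))
              (x i)) ^ 2
          + lam * ∑ i, |y i| * (c_d * ε ^ (d - 1)))
      (nhdsWithin 0 (Set.Ioi 0)) (nhds 0) ∧
    (⨅ f : EuclideanSpace ℝ (Fin d) → ℝ,
        ((1 / 2) * ∑ i, (y i - f (x i)) ^ 2 + lam * TV f)) = 0 :=
  stmt16_general hd x hx y lam hlam TV c_d hTVnn hTVadd hTVsmul hTVball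
end
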